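/- For Re(s) > 1, the Dirichlet series D(s) = \sum_{h \ge 1} a(h) h^{-s}, where a is the multiplicative function with a(p^k)=1 for p \equiv 1 (4), a(2^k) = 2 - 3\cdot 2^{-k}, a(p^k) = (1-p^{-(k+1)})/(1-p^{-1}) for p \equiv 3 (4), factors as D(s) = \zeta(s)(1 - 2^{-s}) R(s) \prod_{p \equiv 3 (4)} (1 - p^{-(s+1)})^{-1}, where R(s) = 1 + 2\cdot 2^{-s}/(1 - 2^{-s}) - 3\cdot 2^{-(s+1)}/(1 - 2^{-(s+1)}). -/

import Mathlib

/-!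
Möbius inversion writes `a = 1 * b` with `b = a * μ`, so `D(s) = ζ(s) L(b, s)`. The function `b`
is multiplicative with `b(p^(k+1)) = a(p^(k+1)) - a(p^k)`: it vanishes on the powers of primes
`p ≡ 1 (4)`, equals `p^(-k)` on `p^k` for `p ≡ 3 (4)`, and takes the values `1, -1/2, 3·2^(-k)`
`(k ≥ 2)` on powers of `2`. Hence `|b| ≤ 1`, `L(b, s)` has an Euler product, and its factors are
`1`, the geometric series `(1 - p^(-(s+1)))⁻¹`, and at `2` the rational function
`1 - y + 3y²/(1 - y) = (1 - 2^(-s)) R(s)` of `y = 2^(-(s+1))`.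
-/

open Complex

open ArithmeticFunction LSeries
open scoped ArithmeticFunction.Moebius ArithmeticFunction.zeta

namespace ArithmeticFunction

theorem mul_moebius_apply_prime_pow_succ {R : Type*} [CommRing R] (f : ArithmeticFunction R)
    {p : ℕ} (hp : p.Prime) (k : ℕ) :
    (f * μ) (p ^ (k + 1)) = f (p ^ (k + 1)) - f (p ^ k) := by
  have partial_sum (n : ℕ) : f (p ^ n) = ∑ i ∈ Finset.range (n + 1), (f * μ) (p ^ i) := by
    conv_lhs => rw [← mul_one f, ← coe_moebius_mul_coe_zeta, ← mul_assoc]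
    rw [coe_mul_zeta_apply, Nat.sum_divisors_prime_pow hp]
  rw [partial_sum (k + 1), partial_sum k, Finset.sum_range_succ, add_sub_cancel_left]

theorem IsMultiplicative.norm_le_one {R : Type*} [NormedCommRing R] [NormOneClass R]
    {f : ArithmeticFunction R} (hf : f.IsMultiplicative)
    (h : ∀ p k : ℕ, p.Prime → ‖f (p ^ (k + 1))‖ ≤ 1) (n : ℕ) : ‖f n‖ ≤ 1 := by
  induction n using Nat.recOnPosPrimePosCoprime with
  | prime_pow p k hp hk =>
    obtain ⟨k, rfl⟩ := Nat.exists_eq_add_of_lt hk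
    simpa using h p k hp
  | zero => simp
  | one => simp [hf.map_one]
  | coprime m n _ _ hmn hm hn =>
    rw [hf.map_mul_of_coprime hmn]
    exact (norm_mul_le _ _).trans (mul_le_one₀ hm (norm_nonneg _) hn)

theorem LSeries_eq_riemannZeta_mul {f : ArithmeticFunction ℂ} {s : ℂ} (hs : 1 < s.re)
    (hf : LSeriesSummable ⇑(f * μ) s) :
    LSeries f s = riemannZeta s * LSeries ⇑(f * μ) s := by
  have hζ : ⇑(ζ : ArithmeticFunction ℂ) = fun n ↦ ((ζ n : ℕ) : ℂ) :=
    funext fun _ ↦ natCoe_apply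
  have hfactor : f = (ζ : ArithmeticFunction ℂ) * (f * μ) := by
    rw [mul_comm, mul_assoc, coe_moebius_mul_coe_zeta, mul_one]
  conv_lhs => rw [hfactor]
  rw [LSeries_mul' (hζ ▸ LSeriesSummable_zeta_iff.mpr hs) hf, hζ,
    LSeries_zeta_eq_riemannZeta hs]

end ArithmeticFunction

namespace EulerProduct

variable {R : Type*} [NormedCommRing R] [CompleteSpace R] {f : ℕ → R}

theorem tsum_eq_mul_tprod_ite (hf₁ : f 1 = 1)
    (hmul : ∀ {m n : ℕ}, m.Coprime n → f (m * n) = f m * f n) (hsum : Summable (‖f ·‖))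
    (hf₀ : f 0 = 0) (q : Nat.Primes) :
    ∑' n, f n =
      (∑' e, f (q ^ e)) * ∏' p : Nat.Primes, if p = q then 1 else ∑' e, f (p ^ e) := by
  have hq : (q : ℕ).Prime := q.prop
  -- Killing the multiples of `q` replaces the Euler factor at `q` by `1`; the Euler product of
  -- the result supplies the multipliability needed to split off that factor.
  set g : ℕ → R := fun n ↦ if (q : ℕ) ∣ n then 0 else f n with hg
  have hg₁ : g 1 = 1 := by simp [hg, hq.one_lt.ne', hf₁, Nat.dvd_one]
  have hgmul {m n : ℕ} (hmn : m.Coprime n) : g (m * n) = g m * g n := by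
    simp only [hg, hq.dvd_mul]
    split_ifs <;> simp_all [hmul hmn]
  have hgsum : Summable (‖g ·‖) :=
    hsum.of_nonneg_of_le (fun _ ↦ norm_nonneg _) fun n ↦ by
      simp only [hg]; split_ifs <;> simp
  have hg_factors : (fun p : Nat.Primes ↦ ∑' e, g (p ^ e)) =
      Function.update (fun p : Nat.Primes ↦ ∑' e, f (p ^ e)) q 1 := by
    funext p
    rcases eq_or_ne p q with rfl | hpq
    · rw [Function.update_self, tsum_eq_single 0 fun e he ↦ by simp [hg, dvd_pow_self _ he]]
      simpa using hg₁
    · rw [Function.update_of_ne hpq]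
      refine tsum_congr fun e ↦ ?_
      have : ¬ (q : ℕ) ∣ (p : ℕ) ^ e := fun h ↦ hpq <| Subtype.ext <|
        ((Nat.prime_dvd_prime_iff_eq hq p.prop).mp (hq.dvd_of_dvd_pow h)).symm
      simp [hg, this]
  rw [← eulerProduct_tprod hf₁ hmul hsum hf₀]
  exact Multipliable.tprod_eq_mul_tprod_ite' q <|
    hg_factors ▸ (eulerProduct_hasProd hg₁ hgmul hgsum (by simp [hg])).multipliable

end EulerProduct

theorem ArithmeticFunction.IsMultiplicative.LSeries_eq_mul_tprod_ite {f : ArithmeticFunction ℂ}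
    (hf : f.IsMultiplicative) {s : ℂ} (hs : LSeriesSummable f s) (q : Nat.Primes) :
    LSeries f s = (∑' e, term f s (q ^ e)) *
      ∏' p : Nat.Primes, if p = q then 1 else ∑' e, term f s (p ^ e) := by
  have hmul {m n : ℕ} (hmn : m.Coprime n) : term f s (m * n) = term f s m * term f s n := by
    rcases eq_or_ne m 0 with rfl | hm
    · simp
    rcases eq_or_ne n 0 with rfl | hn
    · simp
    simp only [term_of_ne_zero hm, term_of_ne_zero hn, term_of_ne_zero (mul_ne_zero hm hn),
      hf.map_mul_of_coprime hmn, Nat.cast_mul, natCast_mul_natCast_cpow, mul_div_mul_comm]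
  exact EulerProduct.tsum_eq_mul_tprod_ite (by simp [hf.map_one]) hmul hs.norm (term_zero _ _) q

theorem LSeries.term_pow (f : ℕ → ℂ) (s : ℂ) {p : ℕ} (hp : p ≠ 0) (e : ℕ) :
    term f s (p ^ e) = f (p ^ e) * ((p : ℂ) ^ (-s)) ^ e := by
  rw [term_of_ne_zero (pow_ne_zero e hp), Nat.cast_pow, ← natCast_cpow_natCast_mul,
    cpow_nat_mul, cpow_neg, inv_pow, div_eq_mul_inv]

theorem LSeries.tsum_term_pow_of_apply_pow {f : ℕ → ℂ} {s c : ℂ} {p : ℕ} (hp : p ≠ 0)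
    (hf : ∀ e, f (p ^ e) = c ^ e) (hc : ‖c * (p : ℂ) ^ (-s)‖ < 1) :
    ∑' e, term f s (p ^ e) = (1 - c * (p : ℂ) ^ (-s))⁻¹ := by
  simp_rw [term_pow f s hp, hf, ← mul_pow]
  exact tsum_geometric_of_norm_lt_one hc

theorem Complex.norm_natCast_cpow_neg_lt_one {n : ℕ} (hn : 1 < n) {s : ℂ} (hs : 0 < s.re) :
    ‖(n : ℂ) ^ (-s)‖ < 1 := by
  rw [norm_natCast_cpow_of_pos (by omega), neg_re]
  exact Real.rpow_lt_one_of_one_lt_of_neg (by exact_mod_cast hn) (by linarith)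

theorem Complex.natCast_cpow_neg_add_one {n : ℕ} (hn : n ≠ 0) (s : ℂ) :
    (n : ℂ) ^ (-(s + 1)) = (n : ℂ)⁻¹ * (n : ℂ) ^ (-s) := by
  rw [neg_add, cpow_add _ _ (by exact_mod_cast hn), cpow_neg_one, mul_comm]

def Nat.Primes.two : Nat.Primes := ⟨2, Nat.prime_two⟩

@[simp]
theorem Nat.Primes.coe_two : (Nat.Primes.two : ℕ) = 2 := rfl

theorem tprod_primes_ite_two_eq {α : Type*} [CommMonoid α] [TopologicalSpace α]
    {P : Nat.Primes → α} (hP : ∀ p : Nat.Primes, (p : ℕ) % 4 = 1 → P p = 1) :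
    (∏' p : Nat.Primes, if p = .two then 1 else P p) =
      ∏' p : {p : ℕ // p.Prime ∧ p % 4 = 3}, P ⟨p, p.2.1⟩ := by
  set i : {p : ℕ // p.Prime ∧ p % 4 = 3} → Nat.Primes := fun p ↦ ⟨p, p.2.1⟩
  have hi : Function.Injective i := fun p q h ↦
    Subtype.ext ((Nat.Primes.coe_nat_inj _ _).mpr h)
  have hsupport :
      Function.mulSupport (fun p : Nat.Primes ↦ if p = .two then 1 else P p) ⊆ Set.range i := by
    intro p hp
    have hp2 : p ≠ .two := fun h ↦ hp (if_pos h)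
    rw [Function.mem_mulSupport, if_neg hp2] at hp
    have hodd : (p : ℕ) % 2 = 1 :=
      Nat.odd_iff.mp (p.prop.odd_of_ne_two fun h ↦ hp2 (Subtype.ext h))
    rcases (by omega : (p : ℕ) % 4 = 1 ∨ (p : ℕ) % 4 = 3) with hp1 | hp3
    · exact absurd (hP p hp1) hp
    · exact ⟨⟨p, p.prop, hp3⟩, rfl⟩
  rw [← hi.tprod_eq hsupport]
  refine tprod_congr fun p ↦ if_neg fun h ↦ ?_
  have h2 : (p : ℕ) = 2 := (Nat.Primes.coe_nat_inj _ _).mpr h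
  have h3 := p.2.2
  omega

noncomputable def moebiusTransform (a : ℕ → ℝ) : ArithmeticFunction ℂ :=
  toArithmeticFunction (fun n ↦ (a n : ℂ)) * μ

section

variable {a : ℕ → ℝ}

theorem sub_apply_prime_pow_of_mod_four_eq_one (ha1 : a 1 = 1)
    (h1 : ∀ p k : ℕ, p.Prime → p % 4 = 1 → 1 ≤ k → a (p ^ k) = 1)
    {p : ℕ} (hp : p.Prime) (hp1 : p % 4 = 1) (k : ℕ) : a (p ^ (k + 1)) - a (p ^ k) = 0 := by
  have apply_pow (j : ℕ) : a (p ^ j) = 1 := by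
    rcases Nat.eq_zero_or_pos j with rfl | hj
    · simpa using ha1
    · exact h1 p j hp hp1 hj
  simp [apply_pow]

theorem apply_two_sub_apply_one (ha1 : a 1 = 1)
    (h2 : ∀ k : ℕ, 1 ≤ k → a (2 ^ k) = 2 - 3 * (2 : ℝ) ^ (-(k : ℤ))) :
    a 2 - a 1 = -2⁻¹ := by
  rw [ha1, ← pow_one 2, h2 1 le_rfl]
  norm_num

theorem sub_apply_two_pow
    (h2 : ∀ k : ℕ, 1 ≤ k → a (2 ^ k) = 2 - 3 * (2 : ℝ) ^ (-(k : ℤ))) (k : ℕ) :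
    a (2 ^ (k + 2)) - a (2 ^ (k + 1)) = 3 * (2⁻¹ : ℝ) ^ (k + 2) := by
  rw [h2 _ (by omega), h2 _ (by omega), zpow_neg, zpow_neg, zpow_natCast, zpow_natCast,
    ← inv_pow, ← inv_pow]
  ring

theorem sub_apply_prime_pow_of_mod_four_eq_three (ha1 : a 1 = 1)
    (h3 : ∀ p k : ℕ, p.Prime → p % 4 = 3 → 1 ≤ k →
      a (p ^ k) = (1 - (p : ℝ) ^ (-((k : ℤ) + 1))) / (1 - (p : ℝ)⁻¹))
    {p : ℕ} (hp : p.Prime) (hp3 : p % 4 = 3) (k : ℕ) :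
    a (p ^ (k + 1)) - a (p ^ k) = ((p : ℝ)⁻¹) ^ (k + 1) := by
  have hp1 : 1 - (p : ℝ)⁻¹ ≠ 0 := by
    rw [sub_ne_zero, ne_comm, inv_ne_one]
    exact_mod_cast hp.one_lt.ne'
  have apply_pow (j : ℕ) :
      a (p ^ j) = (1 - ((p : ℝ)⁻¹) ^ (j + 1)) / (1 - (p : ℝ)⁻¹) := by
    rcases Nat.eq_zero_or_pos j with rfl | hj
    · simpa [ha1] using (div_self hp1).symm
    · rw [h3 p j hp hp3 hj, inv_pow, ← zpow_natCast, ← zpow_neg]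
      push_cast; rfl
  rw [apply_pow, apply_pow, div_sub_div_same, div_eq_iff hp1]
  ring

theorem abs_sub_apply_prime_pow_le_one (ha1 : a 1 = 1)
    (h1 : ∀ p k : ℕ, p.Prime → p % 4 = 1 → 1 ≤ k → a (p ^ k) = 1)
    (h2 : ∀ k : ℕ, 1 ≤ k → a (2 ^ k) = 2 - 3 * (2 : ℝ) ^ (-(k : ℤ)))
    (h3 : ∀ p k : ℕ, p.Prime → p % 4 = 3 → 1 ≤ k →
      a (p ^ k) = (1 - (p : ℝ) ^ (-((k : ℤ) + 1))) / (1 - (p : ℝ)⁻¹))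
    {p : ℕ} (hp : p.Prime) (k : ℕ) : |a (p ^ (k + 1)) - a (p ^ k)| ≤ 1 := by
  rcases hp.eq_two_or_odd with rfl | hodd
  · rcases k with _ | k
    · rw [zero_add, pow_one, pow_zero, apply_two_sub_apply_one ha1 h2]
      norm_num
    · rw [sub_apply_two_pow h2, abs_of_pos (by positivity)]
      calc 3 * (2⁻¹ : ℝ) ^ (k + 2) ≤ 3 * (2⁻¹) ^ 2 := by
            gcongr 3 * ?_
            exact pow_le_pow_of_le_one (by norm_num) (by norm_num) (by omega)
        _ ≤ 1 := by norm_num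
  · rcases (by omega : p % 4 = 1 ∨ p % 4 = 3) with hp1 | hp3
    · simp [sub_apply_prime_pow_of_mod_four_eq_one ha1 h1 hp hp1]
    · rw [sub_apply_prime_pow_of_mod_four_eq_three ha1 h3 hp hp3, abs_of_nonneg (by positivity)]
      exact pow_le_one₀ (by positivity) (inv_le_one_of_one_le₀ (by exact_mod_cast hp.one_le))

theorem moebiusTransform_apply_prime_pow_succ {p : ℕ} (hp : p.Prime) (k : ℕ) :
    moebiusTransform a (p ^ (k + 1)) = ((a (p ^ (k + 1)) - a (p ^ k) : ℝ) : ℂ) := by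
  rw [moebiusTransform, mul_moebius_apply_prime_pow_succ _ hp]
  simp [toArithmeticFunction, hp.ne_zero]

theorem isMultiplicative_moebiusTransform (ha1 : a 1 = 1)
    (hmul : ∀ m n : ℕ, Nat.Coprime m n → a (m * n) = a m * a n) :
    (moebiusTransform a).IsMultiplicative := by
  refine IsMultiplicative.mul
    (IsMultiplicative.iff_ne_zero.mpr ⟨?_, fun {m n} hm hn hmn ↦ ?_⟩)
    isMultiplicative_moebius.intCast
  · simp [toArithmeticFunction, ha1]
  · simp [toArithmeticFunction, hm, hn, hmul m n hmn]

theorem moebiusTransform_apply_one (ha1 : a 1 = 1) : moebiusTransform a 1 = 1 := by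
  rw [moebiusTransform, mul_apply, Nat.divisorsAntidiagonal_one]
  simp [toArithmeticFunction, ha1]

theorem LSeriesSummable_moebiusTransform (ha1 : a 1 = 1)
    (hmul : ∀ m n : ℕ, Nat.Coprime m n → a (m * n) = a m * a n)
    (h1 : ∀ p k : ℕ, p.Prime → p % 4 = 1 → 1 ≤ k → a (p ^ k) = 1)
    (h2 : ∀ k : ℕ, 1 ≤ k → a (2 ^ k) = 2 - 3 * (2 : ℝ) ^ (-(k : ℤ)))
    (h3 : ∀ p k : ℕ, p.Prime → p % 4 = 3 → 1 ≤ k →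
      a (p ^ k) = (1 - (p : ℝ) ^ (-((k : ℤ) + 1))) / (1 - (p : ℝ)⁻¹))
    {s : ℂ} (hs : 1 < s.re) : LSeriesSummable (moebiusTransform a) s := by
  refine LSeriesSummable_of_bounded_of_one_lt_re (m := 1) (fun n _ ↦ ?_) hs
  refine (isMultiplicative_moebiusTransform ha1 hmul).norm_le_one (fun p k hp ↦ ?_) n
  rw [moebiusTransform_apply_prime_pow_succ hp, Complex.norm_real, Real.norm_eq_abs]
  exact abs_sub_apply_prime_pow_le_one ha1 h1 h2 h3 hp k

theorem tsum_term_moebiusTransform_of_mod_four_eq_one (ha1 : a 1 = 1)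
    (h1 : ∀ p k : ℕ, p.Prime → p % 4 = 1 → 1 ≤ k → a (p ^ k) = 1)
    {p : ℕ} (hp : p.Prime) (hp1 : p % 4 = 1) (s : ℂ) :
    ∑' e, term (moebiusTransform a) s (p ^ e) = 1 := by
  have apply_pow (e : ℕ) : moebiusTransform a (p ^ e) = 0 ^ e := by
    rcases e with _ | e
    · simpa using moebiusTransform_apply_one ha1
    · simp [moebiusTransform_apply_prime_pow_succ hp,
        sub_apply_prime_pow_of_mod_four_eq_one ha1 h1 hp hp1]
  simpa using tsum_term_pow_of_apply_pow (s := s) hp.ne_zero apply_pow (by simp)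

theorem tsum_term_moebiusTransform_of_mod_four_eq_three (ha1 : a 1 = 1)
    (h3 : ∀ p k : ℕ, p.Prime → p % 4 = 3 → 1 ≤ k →
      a (p ^ k) = (1 - (p : ℝ) ^ (-((k : ℤ) + 1))) / (1 - (p : ℝ)⁻¹))
    {p : ℕ} (hp : p.Prime) (hp3 : p % 4 = 3) {s : ℂ} (hs : -1 < s.re) :
    ∑' e, term (moebiusTransform a) s (p ^ e) = (1 - (p : ℂ) ^ (-(s + 1)))⁻¹ := by
  have apply_pow (e : ℕ) : moebiusTransform a (p ^ e) = ((p : ℂ)⁻¹) ^ e := by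
    rcases e with _ | e
    · simpa using moebiusTransform_apply_one ha1
    · simp [moebiusTransform_apply_prime_pow_succ hp,
        sub_apply_prime_pow_of_mod_four_eq_three ha1 h3 hp hp3]
  have hnorm : ‖(p : ℂ) ^ (-(s + 1))‖ < 1 :=
    norm_natCast_cpow_neg_lt_one hp.one_lt (by rw [add_re, one_re]; linarith)
  rw [natCast_cpow_neg_add_one hp.ne_zero] at hnorm ⊢
  exact tsum_term_pow_of_apply_pow hp.ne_zero apply_pow hnorm

theorem tsum_term_moebiusTransform_two (ha1 : a 1 = 1)
    (h2 : ∀ k : ℕ, 1 ≤ k → a (2 ^ k) = 2 - 3 * (2 : ℝ) ^ (-(k : ℤ)))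
    {s : ℂ} (hs : 0 < s.re) :
    ∑' e, term (moebiusTransform a) s (2 ^ e) = (1 - (2 : ℂ) ^ (-s)) *
      (1 + 2 * ((2 : ℂ) ^ (-s) / (1 - (2 : ℂ) ^ (-s)))
        - 3 * ((2 : ℂ) ^ (-(s + 1)) / (1 - (2 : ℂ) ^ (-(s + 1))))) := by
  have hx : ‖(2 : ℂ) ^ (-s)‖ < 1 := by
    exact_mod_cast norm_natCast_cpow_neg_lt_one one_lt_two hs
  have hy : ‖(2 : ℂ) ^ (-(s + 1))‖ < 1 := by
    exact_mod_cast norm_natCast_cpow_neg_lt_one one_lt_two (s := s + 1)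
      (by rw [add_re, one_re]; linarith)
  have hxy : (2 : ℂ) ^ (-(s + 1)) = 2⁻¹ * 2 ^ (-s) := by
    exact_mod_cast natCast_cpow_neg_add_one two_ne_zero s
  have hterm (e : ℕ) : term (moebiusTransform a) s (2 ^ e) =
      moebiusTransform a (2 ^ e) * ((2 : ℂ) ^ (-s)) ^ e := by
    simpa using term_pow (moebiusTransform a) s two_ne_zero e
  have htail : HasSum (fun e ↦ term (moebiusTransform a) s (2 ^ (e + 2)))
      (3 * ((2 : ℂ) ^ (-(s + 1))) ^ 2 * (1 - (2 : ℂ) ^ (-(s + 1)))⁻¹) := by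
    refine ((hasSum_geometric_of_norm_lt_one hy).mul_left _).congr_fun fun e ↦ ?_
    rw [hterm, moebiusTransform_apply_prime_pow_succ Nat.prime_two, sub_apply_two_pow h2, hxy]
    push_cast
    ring
  have hb₂ : moebiusTransform a 2 = -2⁻¹ := by
    simpa [apply_two_sub_apply_one ha1 h2] using
      moebiusTransform_apply_prime_pow_succ (a := a) Nat.prime_two 0
  rw [((hasSum_nat_add_iff (f := fun e ↦ term (moebiusTransform a) s (2 ^ e)) 2).mp
      htail).tsum_eq, Finset.sum_range_succ, Finset.sum_range_one, hterm, hterm, pow_zero,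
    pow_one, moebiusTransform_apply_one ha1, hb₂, hxy]
  generalize (2 : ℂ) ^ (-s) = x at hx ⊢
  have hx1 : 1 - x ≠ 0 := sub_ne_zero.mpr fun h ↦ by simp [← h] at hx
  have hx2 : 2 - x ≠ 0 := sub_ne_zero.mpr fun h ↦ by norm_num [← h] at hx
  field_simp
  ring

end

/-- Factorization of the Dirichlet series `D(s) = ∑_{h ≥ 1} a(h) h^{-s}` for `Re(s) > 1`,
where `a` is the multiplicative function with `a(p^k) = 1` for `p ≡ 1 (4)`,
`a(2^k) = 2 - 3·2^{-k}`, and `a(p^k) = (1-p^{-(k+1)})/(1-p^{-1})` for `p ≡ 3 (4)`. -/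
theorem statement2 (a : ℕ → ℝ)
    (ha1 : a 1 = 1)
    (hmul : ∀ m n : ℕ, Nat.Coprime m n → a (m * n) = a m * a n)
    (h1 : ∀ p k : ℕ, p.Prime → p % 4 = 1 → 1 ≤ k → a (p ^ k) = 1)
    (h2 : ∀ k : ℕ, 1 ≤ k → a (2 ^ k) = 2 - 3 * (2 : ℝ) ^ (-(k : ℤ)))
    (h3 : ∀ p k : ℕ, p.Prime → p % 4 = 3 → 1 ≤ k →
      a (p ^ k) = (1 - (p : ℝ) ^ (-((k : ℤ) + 1))) / (1 - (p : ℝ)⁻¹))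
    (s : ℂ) (hs : 1 < s.re) :
    ∑' h : ℕ, (if h = 0 then 0 else (a h : ℂ)) / (h : ℂ) ^ s
      = riemannZeta s * (1 - (2 : ℂ) ^ (-s)) *
          (1 + 2 * ((2 : ℂ) ^ (-s) / (1 - (2 : ℂ) ^ (-s)))
            - 3 * ((2 : ℂ) ^ (-(s + 1)) / (1 - (2 : ℂ) ^ (-(s + 1))))) *
          ∏' p : {p : ℕ // p.Prime ∧ p % 4 = 3}, (1 - ((p : ℕ) : ℂ) ^ (-(s + 1)))⁻¹ := by
  have hb := isMultiplicative_moebiusTransform ha1 hmul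
  have hbs := LSeriesSummable_moebiusTransform ha1 hmul h1 h2 h3 hs
  have hD : ∑' h : ℕ, (if h = 0 then 0 else (a h : ℂ)) / (h : ℂ) ^ s =
      LSeries (toArithmeticFunction fun n ↦ (a n : ℂ)) s :=
    tsum_congr fun h ↦ by rcases eq_or_ne h 0 with rfl | hh <;> simp [toArithmeticFunction, *]
  have hζ : LSeries (toArithmeticFunction fun n ↦ (a n : ℂ)) s =
      riemannZeta s * LSeries (moebiusTransform a) s :=
    LSeries_eq_riemannZeta_mul hs hbs
  rw [hD, hζ, hb.LSeries_eq_mul_tprod_ite hbs .two, Nat.Primes.coe_two,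
    tsum_term_moebiusTransform_two ha1 h2 (by linarith),
    tprod_primes_ite_two_eq fun p hp1 ↦
      tsum_term_moebiusTransform_of_mod_four_eq_one ha1 h1 p.2 hp1 s,
    tprod_congr fun p ↦
      tsum_term_moebiusTransform_of_mod_four_eq_three ha1 h3 p.2.1 p.2.2 (by linarith)]
  ring
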